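/- arXiv:1805.02950 — 6 statements merged into one kernel-verified Lean document; each statement's English description precedes it below -/
import Mathlib

section
/- With φ_K^L the double-logarithm cutoff built from a smooth φ with bounded first derivative, there exists a constant C > 0 (depending only on φ and n) such that for all v ∈ [0,∞)^n and all j, |∂_j φ_K^L(v)| ≤ C / (log(K+1) · (∑_{k=1}^n v_k + e) · log(∑_{k=1}^n v_k + e)). -/
theorem cutoff_first_derivative_bound (n : ℕ) (hn : 1 ≤ n) (φ : ℝ → ℝ)
    (hφ : ContDiff ℝ (⊤ : ℕ∞) φ) (B : ℝ) (hB : ∀ x, |deriv φ x| ≤ B)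
    (h0 : ∀ x ≤ (0 : ℝ), φ x = 1) (h1 : ∀ x ≥ (1 : ℝ), φ x = 0)
    (K L : ℕ) (hK : 3 ≤ K) :
    ∃ C : ℝ, 0 < C ∧ ∀ v : Fin n → ℝ, (∀ k, 0 ≤ v k) → ∀ j : Fin n,
      |fderiv ℝ (fun w : Fin n → ℝ =>
          φ ((Real.log (Real.log (∑ k, w k + Real.exp 1)) -
            Real.log (Real.log ((L : ℝ) + Real.exp 1))) / Real.log ((K : ℝ) + 1)))
        v (Pi.single j 1)| ≤
      C / (Real.log ((K : ℝ) + 1) * (∑ k, v k + Real.exp 1) *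
        Real.log (∑ k, v k + Real.exp 1)) := by
  have hK1 : (1:ℝ) < (K:ℝ) + 1 := by
    have : (3:ℝ) ≤ (K:ℝ) := by exact_mod_cast hK
    linarith
  have ha : 0 < Real.log ((K:ℝ)+1) := Real.log_pos hK1
  have hB0 : 0 ≤ B := le_trans (abs_nonneg _) (hB 0)
  refine ⟨B + 1, by linarith, ?_⟩
  intro v hv j
  have hsum : 0 ≤ ∑ k, v k := Finset.sum_nonneg fun k _ => hv k
  have he1 : (1:ℝ) < Real.exp 1 := by
    have := Real.add_one_le_exp (1:ℝ); linarith
  set s := ∑ k, v k + Real.exp 1 with hs_def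
  have hse : Real.exp 1 ≤ s := by simp [hs_def]; linarith
  have hs1 : 1 < s := lt_of_lt_of_le he1 hse
  have hs0 : s ≠ 0 := by linarith
  have hspos : 0 < s := by linarith
  have hlogs : 1 ≤ Real.log s := by
    calc (1:ℝ) = Real.log (Real.exp 1) := (Real.log_exp 1).symm
    _ ≤ Real.log s := Real.log_le_log (Real.exp_pos 1) hse
  have hlogpos : 0 < Real.log s := by linarith
  have hls0 : Real.log s ≠ 0 := ne_of_gt hlogpos
  set a := Real.log ((K:ℝ)+1) with ha_def
  let P : (Fin n → ℝ) →L[ℝ] ℝ := ∑ k : Fin n, ContinuousLinearMap.proj k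
  have hP : ∀ w : Fin n → ℝ, P w = ∑ k, w k := by
    intro w; simp [P]
  have h1' : HasFDerivAt (fun w : Fin n → ℝ => ∑ k, w k + Real.exp 1) P v := by
    have := (P.hasFDerivAt (x := v)).add_const (Real.exp 1)
    simpa only [hP] using this
  have h2 : HasFDerivAt (fun w : Fin n → ℝ => Real.log (∑ k, w k + Real.exp 1))
      (s⁻¹ • P) v := by
    have := (Real.hasDerivAt_log hs0).comp_hasFDerivAt v h1'; exact this
  have h3 : HasFDerivAt
      (fun w : Fin n → ℝ => Real.log (Real.log (∑ k, w k + Real.exp 1)))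
      ((Real.log s)⁻¹ • (s⁻¹ • P)) v :=
    by have := (Real.hasDerivAt_log hls0).comp_hasFDerivAt v h2; exact this
  have h4 : HasFDerivAt
      (fun w : Fin n → ℝ => (Real.log (Real.log (∑ k, w k + Real.exp 1)) -
        Real.log (Real.log ((L : ℝ) + Real.exp 1))) / a)
      (a⁻¹ • ((Real.log s)⁻¹ • (s⁻¹ • P))) v := by
    have := (h3.sub_const (Real.log (Real.log ((L : ℝ) + Real.exp 1)))).const_smul a⁻¹
    simpa only [Pi.smul_def, smul_eq_mul, div_eq_inv_mul] using this
  set u := (Real.log (Real.log s) - Real.log (Real.log ((L : ℝ) + Real.exp 1))) / a with hu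
  have hφd : HasDerivAt φ (deriv φ u) u := ((hφ.differentiable (by simp)) u).hasDerivAt
  have h5 : HasFDerivAt (fun w : Fin n → ℝ =>
      φ ((Real.log (Real.log (∑ k, w k + Real.exp 1)) -
        Real.log (Real.log ((L : ℝ) + Real.exp 1))) / a))
      (deriv φ u • (a⁻¹ • ((Real.log s)⁻¹ • (s⁻¹ • P)))) v :=
    hφd.comp_hasFDerivAt v h4
  rw [h5.fderiv]
  have hPval : P (Pi.single j 1) = 1 := by
    simp [hP, Pi.single_apply]
  simp only [ContinuousLinearMap.smul_apply, hPval, smul_eq_mul, mul_one]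
  rw [abs_mul]
  have habs : |a⁻¹ * ((Real.log s)⁻¹ * s⁻¹)| = (a * s * Real.log s)⁻¹ := by
    rw [abs_of_pos (by positivity)]
    field_simp
  rw [habs]
  rw [div_eq_mul_inv]
  have hdpos : (0:ℝ) < (a * s * Real.log s)⁻¹ := by positivity
  have := hB u
  nlinarith [abs_nonneg (deriv φ u)]
end

section
/- With φ_K^L the double-logarithm cutoff built from a smooth φ with bounded first and second derivatives, there exists C > 0 such that for all v ∈ [0,∞)^n and all i, j, |∂_i ∂_j φ_K^L(v)| ≤ C / (log(K+1) · (∑_{k=1}^n v_k + e)² · log(∑_{k=1}^n v_k + e)). -/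
private noncomputable def qfun (c a s : ℝ) : ℝ := (Real.log (Real.log s) - c) / a
private noncomputable def q1 (a s : ℝ) : ℝ := s⁻¹ / Real.log s / a
private noncomputable def q2 (a s : ℝ) : ℝ :=
  (-(s ^ 2)⁻¹ * Real.log s - s⁻¹ * s⁻¹) / Real.log s ^ 2 / a

private theorem qfun_hasDerivAt (c a : ℝ) {s : ℝ} (hs : 1 < s) :
    HasDerivAt (qfun c a) (q1 a s) s := by
  have hs0 : s ≠ 0 := ne_of_gt (lt_trans one_pos hs)
  have hls : Real.log s ≠ 0 := ne_of_gt (Real.log_pos hs)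
  exact (((Real.hasDerivAt_log hs0).log hls).sub_const c).div_const a

private theorem q1_hasDerivAt (a : ℝ) {s : ℝ} (hs : 1 < s) :
    HasDerivAt (q1 a) (q2 a s) s := by
  have hs0 : s ≠ 0 := ne_of_gt (lt_trans one_pos hs)
  have hls : Real.log s ≠ 0 := ne_of_gt (Real.log_pos hs)
  exact ((hasDerivAt_inv hs0).div (Real.hasDerivAt_log hs0) hls).div_const a

set_option maxHeartbeats 1000000 in
theorem cutoff_second_derivative_bound (n : ℕ) (hn : 1 ≤ n) (φ : ℝ → ℝ)
    (hφ : ContDiff ℝ (⊤ : ℕ∞) φ)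
    (B₁ : ℝ) (hB₁ : ∀ x, |deriv φ x| ≤ B₁)
    (B₂ : ℝ) (hB₂ : ∀ x, |deriv (deriv φ) x| ≤ B₂)
    (h0 : ∀ x ≤ (0 : ℝ), φ x = 1) (h1 : ∀ x ≥ (1 : ℝ), φ x = 0)
    (K L : ℕ) (hK : 3 ≤ K) :
    ∃ C : ℝ, 0 < C ∧ ∀ v : Fin n → ℝ, (∀ k, 0 ≤ v k) → ∀ i j : Fin n,
      |fderiv ℝ (fun w : Fin n → ℝ =>
          fderiv ℝ (fun w' : Fin n → ℝ =>
            φ ((Real.log (Real.log (∑ k, w' k + Real.exp 1)) -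
              Real.log (Real.log ((L : ℝ) + Real.exp 1))) / Real.log ((K : ℝ) + 1)))
            w (Pi.single j 1))
        v (Pi.single i 1)| ≤
      C / (Real.log ((K : ℝ) + 1) * (∑ k, v k + Real.exp 1) ^ 2 *
        Real.log (∑ k, v k + Real.exp 1)) := by
  classical
  set a := Real.log ((K : ℝ) + 1) with ha_def
  set c := Real.log (Real.log ((L : ℝ) + Real.exp 1)) with hc_def
  have hKr : (3 : ℝ) ≤ (K : ℝ) := by exact_mod_cast hK
  have hexp1 : Real.exp 1 < 2.7182818286 := Real.exp_one_lt_d9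
  have ha1 : 1 ≤ a := by
    rw [ha_def, Real.le_log_iff_exp_le (by linarith)]
    linarith
  have ha0 : 0 < a := lt_of_lt_of_le one_pos ha1
  have ha0' : a ≠ 0 := ne_of_gt ha0
  have hB₁0 : 0 ≤ B₁ := le_trans (abs_nonneg _) (hB₁ 0)
  have hB₂0 : 0 ≤ B₂ := le_trans (abs_nonneg _) (hB₂ 0)
  have hφ' : ContDiff ℝ (⊤ : ℕ∞) (deriv φ) :=
    (contDiff_infty_iff_deriv.mp (hφ.of_le (by simp))).2
  -- the linear functional w ↦ ∑ k, w k
  set Lm : (Fin n → ℝ) →L[ℝ] ℝ := ∑ k : Fin n, ContinuousLinearMap.proj k with hLm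
  have hLapp : ∀ w : Fin n → ℝ, Lm w = ∑ k, w k := by
    intro w; simp [hLm, ContinuousLinearMap.sum_apply]
  have hLsingle : ∀ j : Fin n, Lm (Pi.single j 1) = 1 := by
    intro j
    rw [hLapp]
    simp [Finset.sum_pi_single']
  have hS : ∀ w : Fin n → ℝ,
      HasFDerivAt (fun w : Fin n → ℝ => ∑ k, w k + Real.exp 1) Lm w := by
    intro w
    have h := (Lm.hasFDerivAt (x := w)).add_const (Real.exp 1)
    have hfe : (fun x : Fin n → ℝ => Lm x + Real.exp 1)
        = fun x : Fin n → ℝ => ∑ k, x k + Real.exp 1 := by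
      funext x; rw [hLapp]
    rwa [hfe] at h
  -- derivative of the inner scalar function
  have hinner : ∀ w : Fin n → ℝ, 1 < (∑ k, w k + Real.exp 1) →
      HasFDerivAt (fun w' : Fin n → ℝ =>
          φ ((Real.log (Real.log (∑ k, w' k + Real.exp 1)) - c) / a))
        ((deriv φ (qfun c a (∑ k, w k + Real.exp 1)) * q1 a (∑ k, w k + Real.exp 1)) • Lm)
        w := by
    intro w hw
    have h1 : HasDerivAt (fun s => φ (qfun c a s))
        (deriv φ (qfun c a (∑ k, w k + Real.exp 1)) * q1 a (∑ k, w k + Real.exp 1))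
        (∑ k, w k + Real.exp 1) :=
      ((hφ.differentiable (by simp) _).hasDerivAt).comp _ (qfun_hasDerivAt c a hw)
    have := h1.comp_hasFDerivAt w (hS w); exact this
  refine ⟨B₂ + 2 * B₁ + 1, by linarith, ?_⟩
  intro v hv i j
  have hsum0 : 0 ≤ ∑ k, v k := Finset.sum_nonneg fun k _ => hv k
  have he1 : (1 : ℝ) < Real.exp 1 := by
    have := Real.exp_one_gt_d9; linarith
  set s₀ := ∑ k, v k + Real.exp 1 with hs₀
  have hs₀e : Real.exp 1 ≤ s₀ := by rw [hs₀]; linarith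
  have hs₀1 : 1 < s₀ := lt_of_lt_of_le he1 hs₀e
  have hs₀0 : 0 < s₀ := lt_trans one_pos hs₀1
  have hs₀0' : s₀ ≠ 0 := ne_of_gt hs₀0
  have hls1 : 1 ≤ Real.log s₀ := (Real.le_log_iff_exp_le hs₀0).mpr hs₀e
  have hls0 : 0 < Real.log s₀ := lt_of_lt_of_le one_pos hls1
  have hls0' : Real.log s₀ ≠ 0 := ne_of_gt hls0
  -- replace the inner fderiv on a neighborhood of v
  have hUopen : IsOpen {w : Fin n → ℝ | 1 < ∑ k, w k + Real.exp 1} := by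
    have hcont : Continuous fun w : Fin n → ℝ => ∑ k, w k + Real.exp 1 :=
      (continuous_finset_sum _ fun k _ => continuous_apply k).add continuous_const
    exact isOpen_lt continuous_const hcont
  have hmem : {w : Fin n → ℝ | 1 < ∑ k, w k + Real.exp 1} ∈ nhds v := by
    refine hUopen.mem_nhds ?_
    show 1 < ∑ k, v k + Real.exp 1
    rw [← hs₀]; exact hs₀1
  have heq : (fun w : Fin n → ℝ =>
        fderiv ℝ (fun w' : Fin n → ℝ =>
          φ ((Real.log (Real.log (∑ k, w' k + Real.exp 1)) - c) / a))
          w (Pi.single j 1))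
      =ᶠ[nhds v] fun w : Fin n → ℝ =>
        deriv φ (qfun c a (∑ k, w k + Real.exp 1)) * q1 a (∑ k, w k + Real.exp 1) := by
    filter_upwards [hmem] with w hw
    rw [(hinner w hw).fderiv]
    rw [ContinuousLinearMap.smul_apply, hLsingle, smul_eq_mul, mul_one]
  rw [heq.fderiv_eq]
  -- outer derivative
  have hG1d : HasDerivAt (fun s => deriv φ (qfun c a s) * q1 a s)
      (deriv (deriv φ) (qfun c a s₀) * q1 a s₀ * q1 a s₀ + deriv φ (qfun c a s₀) * q2 a s₀)
      s₀ := by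
    have h1 : HasDerivAt (fun s => deriv φ (qfun c a s))
        (deriv (deriv φ) (qfun c a s₀) * q1 a s₀) s₀ :=
      ((hφ'.differentiable (by simp) _).hasDerivAt).comp _
        (qfun_hasDerivAt c a hs₀1)
    exact h1.mul (q1_hasDerivAt a hs₀1)
  have houter : HasFDerivAt (fun w : Fin n → ℝ =>
        deriv φ (qfun c a (∑ k, w k + Real.exp 1)) * q1 a (∑ k, w k + Real.exp 1))
      ((deriv (deriv φ) (qfun c a s₀) * q1 a s₀ * q1 a s₀
          + deriv φ (qfun c a s₀) * q2 a s₀) • Lm) v := by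
    exact hG1d.comp_hasFDerivAt v (hS v)
  rw [houter.fderiv, ContinuousLinearMap.smul_apply, hLsingle, smul_eq_mul, mul_one]
  -- now the numeric bound
  set ls := Real.log s₀ with hls_def
  clear_value ls
  clear hmem hUopen heq hG1d houter hinner hS hLsingle hLapp
  clear_value s₀ a c
  have hpos1 : 0 < a * s₀ * ls := mul_pos (mul_pos ha0 hs₀0) hls0
  have hpos2 : 0 < a * s₀ ^ 2 * ls ^ 2 :=
    mul_pos (mul_pos ha0 (pow_pos hs₀0 2)) (pow_pos hls0 2)
  have hden : 0 < a * s₀ ^ 2 * ls := mul_pos (mul_pos ha0 (pow_pos hs₀0 2)) hls0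
  have hT0 : 0 ≤ (ls + 1) / (a * s₀ ^ 2 * ls ^ 2) := div_nonneg (by linarith) hpos2.le
  have hPeq : q1 a s₀ = (a * s₀ * ls)⁻¹ := by
    unfold q1; rw [← hls_def]; field_simp [ha0', hs₀0', hls0']
  have hQeq : q2 a s₀ = -((ls + 1) / (a * s₀ ^ 2 * ls ^ 2)) := by
    unfold q2; rw [← hls_def]; field_simp [ha0', hs₀0', hls0']; ring
  have hP0 : 0 < q1 a s₀ := by rw [hPeq]; exact inv_pos.mpr hpos1
  rw [le_div_iff₀ hden]
  have h1 : |deriv (deriv φ) (qfun c a s₀) * q1 a s₀ * q1 a s₀| ≤ B₂ * q1 a s₀ ^ 2 := by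
    rw [abs_mul, abs_mul, abs_of_pos hP0]
    nlinarith [hB₂ (qfun c a s₀), abs_nonneg (deriv (deriv φ) (qfun c a s₀))]
  have h2 : |deriv φ (qfun c a s₀) * q2 a s₀|
      ≤ B₁ * ((ls + 1) / (a * s₀ ^ 2 * ls ^ 2)) := by
    rw [abs_mul, hQeq, abs_neg, abs_of_nonneg hT0]
    exact mul_le_mul_of_nonneg_right (hB₁ _) hT0
  have habs : |deriv (deriv φ) (qfun c a s₀) * q1 a s₀ * q1 a s₀
        + deriv φ (qfun c a s₀) * q2 a s₀|
      ≤ B₂ * q1 a s₀ ^ 2 + B₁ * ((ls + 1) / (a * s₀ ^ 2 * ls ^ 2)) :=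
    le_trans (abs_add_le _ _) (by linarith)
  have hA : q1 a s₀ ^ 2 * (a * s₀ ^ 2 * ls) = 1 / (a * ls) := by
    rw [hPeq]; field_simp [ha0', hs₀0', hls0']
  have hB : (ls + 1) / (a * s₀ ^ 2 * ls ^ 2) * (a * s₀ ^ 2 * ls) = (ls + 1) / ls := by
    field_simp [ha0', hs₀0', hls0']
  have h1le : 1 / (a * ls) ≤ 1 := by
    rw [div_le_one (mul_pos ha0 hls0)]; nlinarith
  have h2le : (ls + 1) / ls ≤ 2 := by
    rw [div_le_iff₀ hls0]; linarith
  calc |deriv (deriv φ) (qfun c a s₀) * q1 a s₀ * q1 a s₀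
        + deriv φ (qfun c a s₀) * q2 a s₀| * (a * s₀ ^ 2 * ls)
      ≤ (B₂ * q1 a s₀ ^ 2 + B₁ * ((ls + 1) / (a * s₀ ^ 2 * ls ^ 2))) * (a * s₀ ^ 2 * ls) :=
        mul_le_mul_of_nonneg_right habs hden.le
    _ = B₂ * (q1 a s₀ ^ 2 * (a * s₀ ^ 2 * ls))
        + B₁ * ((ls + 1) / (a * s₀ ^ 2 * ls ^ 2) * (a * s₀ ^ 2 * ls)) := by ring
    _ = B₂ * (1 / (a * ls)) + B₁ * ((ls + 1) / ls) := by rw [hA, hB]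
    _ ≤ B₂ * 1 + B₁ * 2 := by
        have t1 := mul_le_mul_of_nonneg_left h1le hB₂0
        have t2 := mul_le_mul_of_nonneg_left h2le hB₁0
        linarith
    _ ≤ B₂ + 2 * B₁ + 1 := by linarith
end

section
/- Let A_{ij}(u) = δ_{ij}(a_{i0} + ∑_{k=1}^n a_{ik} u_k) + a_{ij} u_i with a_{i0} > 0 and a_{ij} ≥ 0, and assume the weak cross-diffusion condition η := min_i (a_{ii} - (1/4) ∑_{j=1}^n (√a_{ij} - √a_{ji})²) > 0. Then for all u ∈ [0,∞)^n and z ∈ ℝ^n, ∑_{i,j=1}^n A_{ij}(u) u_j z_i z_j ≥ (min_i a_{i0}) ∑_{i=1}^n u_i z_i² + 2η ∑_{i=1}^n u_i² z_i². -/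
theorem diffusion_matrix_psd_weak_cross_diffusion (n : ℕ) (hn : 0 < n)
    (a : Fin n → Fin n → ℝ) (a0 : Fin n → ℝ)
    (ha0 : ∀ i, 0 < a0 i) (ha : ∀ i j, 0 ≤ a i j) :
    haveI : Nonempty (Fin n) := ⟨⟨0, hn⟩⟩
    let η : ℝ := Finset.univ.inf' Finset.univ_nonempty
      (fun i => a i i - (1 / 4) * ∑ j, (Real.sqrt (a i j) - Real.sqrt (a j i)) ^ 2)
    0 < η →
    ∀ u : Fin n → ℝ, (∀ i, 0 ≤ u i) → ∀ z : Fin n → ℝ,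
      (Finset.univ.inf' Finset.univ_nonempty a0) * ∑ i, u i * z i ^ 2 +
        2 * η * ∑ i, u i ^ 2 * z i ^ 2 ≤
      ∑ i, ∑ j, ((if i = j then a0 i + ∑ k, a i k * u k else 0) + a i j * u i)
        * u j * z i * z j := by
  intro η hη u hu z
  haveI : Nonempty (Fin n) := ⟨⟨0, hn⟩⟩
  set m : ℝ := Finset.univ.inf' Finset.univ_nonempty a0 with hm_def
  have hm : ∀ i, m ≤ a0 i := fun i => Finset.inf'_le _ (Finset.mem_univ i)
  have hη' : ∀ i, η ≤ a i i - (1 / 4) * ∑ j,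
      (Real.sqrt (a i j) - Real.sqrt (a j i)) ^ 2 :=
    fun i => Finset.inf'_le _ (Finset.mem_univ i)
  set F : Fin n → Fin n → ℝ :=
    fun i j => a i j * u i * u j * (z i ^ 2 + z i * z j) with hF_def
  set c : Fin n → Fin n → ℝ :=
    fun i j => (Real.sqrt (a i j) - Real.sqrt (a j i)) ^ 2 with hc_def
  have hcsym : ∀ i j, c i j = c j i := fun i j => by simp only [hc_def]; ring
  -- Step 1: rewrite the RHS
  have hsplit : (∑ i, ∑ j, ((if i = j then a0 i + ∑ k, a i k * u k else 0)
        + a i j * u i) * u j * z i * z j)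
      = ∑ i, a0 i * (u i * z i ^ 2) + ∑ i, ∑ j, F i j := by
    rw [← Finset.sum_add_distrib]
    refine Finset.sum_congr rfl fun i _ => ?_
    have step : ∀ j, ((if i = j then a0 i + ∑ k, a i k * u k else 0)
          + a i j * u i) * u j * z i * z j
        = (if i = j then (a0 i + ∑ k, a i k * u k) * (u j * z i * z j) else 0)
          + a i j * u i * (u j * z i * z j) := by
      intro j; split <;> ring
    rw [Finset.sum_congr rfl fun j _ => step j, Finset.sum_add_distrib,
      Finset.sum_ite_eq]
    simp only [Finset.mem_univ, if_true]
    rw [add_mul, Finset.sum_mul, add_assoc, ← Finset.sum_add_distrib]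
    have : ∀ j, a i j * u j * (u i * z i * z i) + a i j * u i * (u j * z i * z j)
        = F i j := by intro j; simp only [hF_def]; ring
    rw [Finset.sum_congr rfl fun j _ => this j]
    ring
  rw [hsplit]
  -- Step 2: bound the a0 part
  have h1 : m * ∑ i, u i * z i ^ 2 ≤ ∑ i, a0 i * (u i * z i ^ 2) := by
    rw [Finset.mul_sum]
    refine Finset.sum_le_sum fun i _ => ?_
    exact mul_le_mul_of_nonneg_right (hm i)
      (mul_nonneg (hu i) (sq_nonneg _))
  -- Step 3: bound T = ∑∑ F below
  have hpair : ∀ i j, (if i = j then 4 * a i i * (u i ^ 2 * z i ^ 2) else 0)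
      - c i j * (u i ^ 2 * z i ^ 2 + u j ^ 2 * z j ^ 2) / 2
      ≤ F i j + F j i := by
    intro i j
    have hp : Real.sqrt (a i j) ^ 2 = a i j := Real.sq_sqrt (ha i j)
    have hq : Real.sqrt (a j i) ^ 2 = a j i := Real.sq_sqrt (ha j i)
    by_cases hij : i = j
    · subst hij
      simp only [hF_def, hc_def, sub_self, eq_self_iff_true, if_true]
      exact le_of_eq (by ring)
    · simp only [hij, if_false, hF_def, hc_def]
      set p := Real.sqrt (a i j) with hp_def
      set q := Real.sqrt (a j i) with hq_def
      rw [← hp, ← hq]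
      nlinarith [mul_nonneg (mul_nonneg (hu i) (hu j)) (sq_nonneg (p * z i + q * z j)),
        mul_nonneg (sq_nonneg (p - q)) (sq_nonneg (u i * z i + u j * z j))]
  have hGsum : ∑ i, ∑ j, ((if i = j then 4 * a i i * (u i ^ 2 * z i ^ 2) else 0)
        - c i j * (u i ^ 2 * z i ^ 2 + u j ^ 2 * z j ^ 2) / 2)
      = ∑ i, (4 * a i i - ∑ j, c i j) * (u i ^ 2 * z i ^ 2) := by
    have hswapc : ∑ i, ∑ j, c i j * (u j ^ 2 * z j ^ 2) / 2
        = ∑ i, ∑ j, c i j * (u i ^ 2 * z i ^ 2) / 2 := by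
      rw [Finset.sum_comm]
      exact Finset.sum_congr rfl fun i _ => Finset.sum_congr rfl fun j _ => by
        rw [hcsym i j]
    have expand : ∀ i j : Fin n,
        (if i = j then 4 * a i i * (u i ^ 2 * z i ^ 2) else 0)
          - c i j * (u i ^ 2 * z i ^ 2 + u j ^ 2 * z j ^ 2) / 2
        = (if i = j then 4 * a i i * (u i ^ 2 * z i ^ 2) else 0)
          - (c i j * (u i ^ 2 * z i ^ 2) / 2 + c i j * (u j ^ 2 * z j ^ 2) / 2) := by
      intro i j; ring_nf
    calc ∑ i, ∑ j, ((if i = j then 4 * a i i * (u i ^ 2 * z i ^ 2) else 0)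
          - c i j * (u i ^ 2 * z i ^ 2 + u j ^ 2 * z j ^ 2) / 2)
        = ∑ i, ((∑ j, (if i = j then 4 * a i i * (u i ^ 2 * z i ^ 2) else 0))
            - ((∑ j, c i j * (u i ^ 2 * z i ^ 2) / 2)
              + ∑ j, c i j * (u j ^ 2 * z j ^ 2) / 2)) := by
          refine Finset.sum_congr rfl fun i _ => ?_
          rw [Finset.sum_congr rfl fun j _ => expand i j, Finset.sum_sub_distrib,
            Finset.sum_add_distrib]
      _ = ∑ i, ((∑ j, (if i = j then 4 * a i i * (u i ^ 2 * z i ^ 2) else 0))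
            - ((∑ j, c i j * (u i ^ 2 * z i ^ 2) / 2)
              + ∑ j, c i j * (u i ^ 2 * z i ^ 2) / 2)) := by
          rw [Finset.sum_sub_distrib, Finset.sum_sub_distrib,
            Finset.sum_add_distrib, Finset.sum_add_distrib, hswapc]
      _ = ∑ i, (4 * a i i - ∑ j, c i j) * (u i ^ 2 * z i ^ 2) := by
          refine Finset.sum_congr rfl fun i _ => ?_
          rw [Finset.sum_ite_eq]
          simp only [Finset.mem_univ, if_true]
          rw [← Finset.sum_div, ← Finset.sum_mul]
          ring
  have h2T : 2 * (∑ i, ∑ j, F i j) = ∑ i, ∑ j, (F i j + F j i) := by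
    have hs : ∑ i, ∑ j, F j i = ∑ i, ∑ j, F i j := Finset.sum_comm
    calc 2 * (∑ i, ∑ j, F i j) = (∑ i, ∑ j, F i j) + ∑ i, ∑ j, F j i := by
          rw [hs, two_mul]
      _ = ∑ i, (∑ j, F i j + ∑ j, F j i) := (Finset.sum_add_distrib).symm
      _ = ∑ i, ∑ j, (F i j + F j i) :=
          Finset.sum_congr rfl fun i _ => (Finset.sum_add_distrib).symm
  have hTlow : 4 * η * ∑ i, u i ^ 2 * z i ^ 2 ≤ 2 * ∑ i, ∑ j, F i j := by
    calc 4 * η * ∑ i, u i ^ 2 * z i ^ 2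
        = ∑ i, 4 * η * (u i ^ 2 * z i ^ 2) := by
          rw [Finset.mul_sum]
      _ ≤ ∑ i, (4 * a i i - ∑ j, c i j) * (u i ^ 2 * z i ^ 2) := by
          refine Finset.sum_le_sum fun i _ => ?_
          refine mul_le_mul_of_nonneg_right ?_
            (mul_nonneg (sq_nonneg _) (sq_nonneg _))
          have h := hη' i
          linarith
      _ = ∑ i, ∑ j, ((if i = j then 4 * a i i * (u i ^ 2 * z i ^ 2) else 0)
            - c i j * (u i ^ 2 * z i ^ 2 + u j ^ 2 * z j ^ 2) / 2) := hGsum.symm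
      _ ≤ ∑ i, ∑ j, (F i j + F j i) :=
          Finset.sum_le_sum fun i _ => Finset.sum_le_sum fun j _ => hpair i j
      _ = 2 * ∑ i, ∑ j, F i j := h2T.symm
  have h2 : ∑ i, u i * z i ^ 2 = ∑ i, u i * z i ^ 2 := rfl
  linarith
end

section
/- Let f_i : [0,∞)^n → ℝ, i = 1,…,n, be continuous functions satisfying the entropy-dissipation condition ∑_{i=1}^n π_i f_i(u)(log u_i + λ_i) ≤ 0 for all u ∈ (0,∞)^n, where π_i > 0 and λ_i ∈ ℝ. Then each f_i is quasi-positive: f_i(u) ≥ 0 for every u ∈ [0,∞)^n with u_i = 0. -/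
/-!
Near a point `u` with `u i = 0` and all other coordinates positive, move only the `i`-th
coordinate: `t ↦ update u i t`. As `t → 0⁺` the other terms of the dissipation sum converge,
while `π i * f i * (log t + λ i)` tends to `+∞` if `f i u < 0`, contradicting that the sum is
`≤ 0`. A general boundary point with `u i = 0` is a limit of such points, and `f i` is continuous.
-/

open Filter Topology

variable {ι : Type*} [Fintype ι] [DecidableEq ι]

theorem nonneg_of_dissipation_of_forall_ne_pos {f : ι → (ι → ℝ) → ℝ} {π lam : ι → ℝ}
    {u : ι → ℝ} {i : ι}
    (hf : ∀ k, ContinuousWithinAt (f k) {v | ∀ k, 0 ≤ v k} u) (hπ : 0 < π i)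
    (hdiss : ∀ v : ι → ℝ, (∀ k, 0 < v k) → ∑ k, π k * f k v * (Real.log (v k) + lam k) ≤ 0)
    (hpos : ∀ k ≠ i, 0 < u k) (hui : u i = 0) :
    0 ≤ f i u := by
  by_contra! hneg
  set γ : ℝ → ι → ℝ := fun t => Function.update u i t
  have hγ_pos : ∀ t > 0, ∀ k, 0 < γ t k := by
    intro t ht k
    rcases eq_or_ne k i with rfl | hk
    · simpa [γ] using ht
    · simpa [γ, hk] using hpos k hk
  have hγ : Tendsto γ (𝓝[>] 0) (𝓝[{v | ∀ k, 0 ≤ v k}] u) := by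
    have hγ0 : γ 0 = u := by simp [γ, hui]
    rw [← hγ0]
    exact (continuous_const.update i continuous_id).continuousWithinAt.tendsto_nhdsWithin
      fun t ht k => (hγ_pos t ht k).le
  have hterm_i : Tendsto (fun t => π i * f i (γ t) * (Real.log (γ t i) + lam i))
      (𝓝[>] 0) atTop := by
    simp only [γ, Function.update_self]
    exact Tendsto.neg_mul_atBot (mul_neg_of_pos_of_neg hπ hneg)
      (tendsto_const_nhds.mul ((hf i).tendsto.comp hγ))
      (tendsto_atBot_add_const_right _ _ Real.tendsto_log_nhdsGT_zero)
  have hterms_ne : Tendsto (fun t => ∑ k ∈ Finset.univ.erase i,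
      π k * f k (γ t) * (Real.log (γ t k) + lam k)) (𝓝[>] 0)
      (𝓝 (∑ k ∈ Finset.univ.erase i, π k * f k u * (Real.log (u k) + lam k))) := by
    refine tendsto_finsetSum _ fun k hk => ?_
    simp only [γ, Function.update_of_ne (Finset.ne_of_mem_erase hk)]
    exact (tendsto_const_nhds.mul ((hf k).tendsto.comp hγ)).mul_const _
  have hsum := (hterm_i.atTop_add hterms_ne).congr fun t =>
    Finset.add_sum_erase _ (fun k => π k * f k (γ t) * (Real.log (γ t k) + lam k))
      (Finset.mem_univ i)
  obtain ⟨t, hsum_pos, ht⟩ :=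
    ((hsum.eventually_gt_atTop 0).and self_mem_nhdsWithin).exists
  exact (hdiss (γ t) (hγ_pos t ht)).not_gt hsum_pos

theorem nonneg_of_dissipation {f : ι → (ι → ℝ) → ℝ} {π lam : ι → ℝ} {u : ι → ℝ} {i : ι}
    (hf : ∀ k, ContinuousOn (f k) {v | ∀ k, 0 ≤ v k}) (hπ : 0 < π i)
    (hdiss : ∀ v : ι → ℝ, (∀ k, 0 < v k) → ∑ k, π k * f k v * (Real.log (v k) + lam k) ≤ 0)
    (hu : ∀ k, 0 ≤ u k) (hui : u i = 0) :
    0 ≤ f i u := by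
  set γ : ℝ → ι → ℝ := fun s => Function.update (fun k => u k + s) i 0
  have hγ_nonneg : ∀ s > 0, ∀ k, 0 ≤ γ s k := by
    intro s hs k
    rcases eq_or_ne k i with rfl | hk
    · simp [γ]
    · simpa [γ, hk] using add_nonneg (hu k) hs.le
  have hγ : Tendsto γ (𝓝[>] 0) (𝓝[{v | ∀ k, 0 ≤ v k}] u) := by
    have hγ0 : γ 0 = u := by simp [γ, hui]
    rw [← hγ0]
    have hγ_cont : Continuous γ :=
      (continuous_pi fun _ => continuous_const.add continuous_id).update i continuous_const
    exact hγ_cont.continuousWithinAt.tendsto_nhdsWithin hγ_nonneg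
  have hface : ∀ s > 0, 0 ≤ f i (γ s) := fun s hs =>
    nonneg_of_dissipation_of_forall_ne_pos (fun k => hf k _ (hγ_nonneg s hs)) hπ hdiss
      (fun k hk => by simpa [γ, hk] using add_pos_of_nonneg_of_pos (hu k) hs) (by simp [γ])
  exact ge_of_tendsto ((hf i u hu).tendsto.comp hγ) (eventually_mem_nhdsWithin.mono hface)

theorem quasi_positivity_of_entropy_dissipation_general (n : ℕ)
    (f : Fin n → (Fin n → ℝ) → ℝ)
    (hf : ∀ i, ContinuousOn (f i) {u : Fin n → ℝ | ∀ k, 0 ≤ u k})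
    (π : Fin n → ℝ) (hπ : ∀ i, 0 < π i) (lam : Fin n → ℝ)
    (hdiss : ∀ u : Fin n → ℝ, (∀ k, 0 < u k) →
      ∑ i, π i * f i u * (Real.log (u i) + lam i) ≤ 0)
    (i : Fin n) (u : Fin n → ℝ) (hu : ∀ k, 0 ≤ u k) (hui : u i = 0) :
    0 ≤ f i u :=
  nonneg_of_dissipation hf (hπ i) hdiss hu hui

theorem quasi_positivity_of_entropy_dissipation (n : ℕ) (hn : 1 ≤ n)
    (f : Fin n → (Fin n → ℝ) → ℝ)
    (hf : ∀ i, ContinuousOn (f i) {u : Fin n → ℝ | ∀ k, 0 ≤ u k})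
    (π : Fin n → ℝ) (hπ : ∀ i, 0 < π i) (lam : Fin n → ℝ)
    (hdiss : ∀ u : Fin n → ℝ, (∀ k, 0 < u k) →
      ∑ i, π i * f i u * (Real.log (u i) + lam i) ≤ 0)
    (i : Fin n) (u : Fin n → ℝ) (hu : ∀ k, 0 ≤ u k) (hui : u i = 0) :
    0 ≤ f i u :=
  quasi_positivity_of_entropy_dissipation_general n f hf π hπ lam hdiss i u hu hui
end

section
/- Let f : [0,∞)^n → ℝ be locally Lipschitz with f(u) ≥ 0 whenever u_i = 0, and let v_i, u_i, ε satisfy 0 < c ≤ v_i ≤ C, 0 ≤ u_i, 0 < ε < 1/2, and ∑_ℓ u_ℓ ≤ L. Then there is a constant C' = C'(L, f, c, C) such that f(u)·(log((u_i+ε)/v_i) - (u_i+ε)/v_i + 1) ≤ C'·(|u_i - v_i|² + ε²). -/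
/-!
On the compact set `{u ≥ 0, ∑ u_ℓ ≤ L}` the function `f` is Lipschitz, say with constant `K`; since
`f` is nonnegative once `u_i` is set to `0`, this gives `-f(u) ≤ K u_i`. The factor
`φ = log s - s + 1` with `s = (u_i + ε)/v` is nonpositive and `-φ ≤ (s - 1)²/s`, so
`f(u) φ ≤ K u_i (u_i + ε - v)² / (v (u_i + ε)) ≤ (K/c) (u_i + ε - v)² ≤ (2K/c) (|u_i - v|² + ε²)`.
-/

open Real Function NNReal

lemma neg_log_sub_add_one_le_sq_sub_one_div {s : ℝ} (hs : 0 < s) :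
    -(log s - s + 1) ≤ (s - 1) ^ 2 / s := by
  have h := log_le_sub_one_of_pos (inv_pos.2 hs)
  rw [log_inv] at h
  have : (s - 1) ^ 2 / s = s - 2 + s⁻¹ := by field_simp; ring
  linarith

lemma mul_neg_log_div_sub_div_add_one_le {a ε v c : ℝ} (ha : 0 ≤ a) (hε : 0 < ε) (hc : 0 < c)
    (hcv : c ≤ v) :
    a * -(log ((a + ε) / v) - (a + ε) / v + 1) ≤ 2 / c * ((a - v) ^ 2 + ε ^ 2) := by
  have hv : 0 < v := hc.trans_le hcv
  have hw : 0 < a + ε := by positivity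
  have hφ := neg_log_sub_add_one_le_sq_sub_one_div (div_pos hw hv)
  have hs : ((a + ε) / v - 1) ^ 2 / ((a + ε) / v) = (a + ε - v) ^ 2 / (v * (a + ε)) := by
    field_simp
  rw [hs] at hφ
  have hlog := log_le_sub_one_of_pos (div_pos hw hv)
  calc a * -(log ((a + ε) / v) - (a + ε) / v + 1)
      ≤ (a + ε) * ((a + ε - v) ^ 2 / (v * (a + ε))) := by
        gcongr
        · linarith
        · linarith
    _ = (a + ε - v) ^ 2 / v := by field_simp
    _ ≤ (a + ε - v) ^ 2 / c := by gcongr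
    _ ≤ 2 / c * ((a - v) ^ 2 + ε ^ 2) := by
        rw [div_mul_eq_mul_div]
        gcongr
        nlinarith [sq_nonneg (a - v - ε)]

lemma mul_log_div_sub_div_add_one_le_of_neg_le {y a ε v c K : ℝ} (hK : 0 ≤ K) (hy : -y ≤ K * a)
    (ha : 0 ≤ a) (hε : 0 < ε) (hc : 0 < c) (hcv : c ≤ v) :
    y * (log ((a + ε) / v) - (a + ε) / v + 1) ≤ 2 * K / c * ((a - v) ^ 2 + ε ^ 2) := by
  have hlog := log_le_sub_one_of_pos (div_pos (add_pos_of_nonneg_of_pos ha hε) (hc.trans_le hcv))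
  calc y * (log ((a + ε) / v) - (a + ε) / v + 1)
      = -y * -(log ((a + ε) / v) - (a + ε) / v + 1) := by ring
    _ ≤ K * (a * -(log ((a + ε) / v) - (a + ε) / v + 1)) := by
        rw [← mul_assoc]; gcongr; linarith
    _ ≤ K * (2 / c * ((a - v) ^ 2 + ε ^ 2)) :=
        mul_le_mul_of_nonneg_left (mul_neg_log_div_sub_div_add_one_le ha hε hc hcv) hK
    _ = 2 * K / c * ((a - v) ^ 2 + ε ^ 2) := by ring

lemma isCompact_nonneg_sum_le {ι : Type*} [Fintype ι] (L : ℝ) :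
    IsCompact {u : ι → ℝ | (∀ k, 0 ≤ u k) ∧ ∑ k, u k ≤ L} := by
  refine (isCompact_Icc (a := 0) (b := fun _ => L)).of_isClosed_subset ?_ ?_
  · exact isClosed_Ici.inter
      (isClosed_le (continuous_finsetSum _ fun k _ => continuous_apply k) continuous_const)
  · rintro u ⟨hu, hsum⟩
    exact ⟨hu, fun k => (Finset.single_le_sum (fun l _ => hu l) (Finset.mem_univ k)).trans hsum⟩

lemma LipschitzOnWith.neg_le_mul_abs_of_nonneg_update {ι : Type*} [Fintype ι] [DecidableEq ι]
    {f : (ι → ℝ) → ℝ} {S : Set (ι → ℝ)} {K : ℝ≥0} (hf : LipschitzOnWith K f S) {u : ι → ℝ}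
    (hu : u ∈ S) {i : ι} (hu₀ : update u i 0 ∈ S) (hf₀ : 0 ≤ f (update u i 0)) :
    -f u ≤ K * |u i| := by
  have hdist : dist u (update u i 0) ≤ |u i| := by
    refine (dist_pi_le_iff (abs_nonneg _)).2 fun k => ?_
    rcases eq_or_ne k i with rfl | hk
    · simp
    · simp [hk]
  calc -f u ≤ dist (f u) (f (update u i 0)) := by
        rw [Real.dist_eq]; exact (neg_le_abs _).trans' (by linarith)
    _ ≤ K * dist u (update u i 0) := hf.dist_le_mul u hu _ hu₀
    _ ≤ K * |u i| := by gcongr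

theorem reaction_relative_entropy_bound_general (n : ℕ)
    (f : (Fin n → ℝ) → ℝ)
    (hf : LocallyLipschitzOn {u : Fin n → ℝ | ∀ k, 0 ≤ u k} f)
    (i : Fin n)
    (hqp : ∀ u : Fin n → ℝ, (∀ k, 0 ≤ u k) → u i = 0 → 0 ≤ f u)
    (c C L : ℝ) (hc : 0 < c) :
    ∃ C' : ℝ, 0 < C' ∧
      ∀ (u : Fin n → ℝ) (v ε : ℝ), (∀ k, 0 ≤ u k) → ∑ k, u k ≤ L →
        c ≤ v → v ≤ C → 0 < ε → ε < 1 / 2 →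
        f u * (Real.log ((u i + ε) / v) - (u i + ε) / v + 1) ≤
          C' * (|u i - v| ^ 2 + ε ^ 2) := by
  obtain ⟨K, hK⟩ := (hf.mono fun _ hu => hu.1).exists_lipschitzOnWith_of_compact
    (isCompact_nonneg_sum_le (ι := Fin n) L)
  refine ⟨2 * K / c + 1, by positivity, fun u v ε hu hsum hcv _ hε _ => ?_⟩
  have hu₀ : ∀ k, 0 ≤ update u i 0 k := le_update_iff.2 ⟨le_rfl, fun k _ => hu k⟩
  have hsum₀ : ∑ k, update u i 0 k ≤ L :=
    (Finset.sum_le_sum fun k _ => update_le_self_iff.2 (hu i) k).trans hsum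
  have hfu : -f u ≤ K * u i := by
    simpa [abs_of_nonneg (hu i)] using hK.neg_le_mul_abs_of_nonneg_update ⟨hu, hsum⟩ ⟨hu₀, hsum₀⟩
      (hqp _ hu₀ (update_self ..))
  calc f u * (log ((u i + ε) / v) - (u i + ε) / v + 1)
      ≤ 2 * K / c * ((u i - v) ^ 2 + ε ^ 2) :=
        mul_log_div_sub_div_add_one_le_of_neg_le K.2 hfu (hu i) hε hc hcv
    _ ≤ (2 * K / c + 1) * (|u i - v| ^ 2 + ε ^ 2) := by rw [sq_abs]; gcongr; linarith

theorem reaction_relative_entropy_bound (n : ℕ) (hn : 1 ≤ n)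
    (f : (Fin n → ℝ) → ℝ)
    (hf : LocallyLipschitzOn {u : Fin n → ℝ | ∀ k, 0 ≤ u k} f)
    (i : Fin n)
    (hqp : ∀ u : Fin n → ℝ, (∀ k, 0 ≤ u k) → u i = 0 → 0 ≤ f u)
    (c C L : ℝ) (hc : 0 < c) (hcC : c ≤ C) (hL : 0 < L) :
    ∃ C' : ℝ, 0 < C' ∧
      ∀ (u : Fin n → ℝ) (v ε : ℝ), (∀ k, 0 ≤ u k) → ∑ k, u k ≤ L →
        c ≤ v → v ≤ C → 0 < ε → ε < 1 / 2 →
        f u * (Real.log ((u i + ε) / v) - (u i + ε) / v + 1) ≤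
          C' * (|u i - v| ^ 2 + ε ^ 2) :=
  reaction_relative_entropy_bound_general n f hf i hqp c C L hc
end

section
/- Let u, v > 0 with v ∈ [c, C] for some 0 < c ≤ C, and suppose u ≤ L. Then there exists a constant C₁ = C₁(L, c, C) > 0 such that |u - v|² ≤ C₁·(u log(u/v) - u + v). -/
theorem relative_entropy_coercivity (c C L : ℝ) (hc : 0 < c) (hcC : c ≤ C)
    (hL : 0 < L) :
    ∃ C₁ : ℝ, 0 < C₁ ∧ ∀ u v : ℝ, 0 < u → u ≤ L → c ≤ v → v ≤ C →
      |u - v| ^ 2 ≤ C₁ * (u * Real.log (u / v) - u + v) := by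
  have hsL : 0 < Real.sqrt L := Real.sqrt_pos.2 hL
  refine ⟨(Real.sqrt L + Real.sqrt C) ^ 2, by positivity, ?_⟩
  intro u v hu huL hcv hvC
  have hv : 0 < v := lt_of_lt_of_le hc hcv
  set a := Real.sqrt u with ha_def
  set b := Real.sqrt v with hb_def
  have ha : 0 < a := Real.sqrt_pos.2 hu
  have hb : 0 < b := Real.sqrt_pos.2 hv
  have ha2 : a ^ 2 = u := Real.sq_sqrt hu.le
  have hb2 : b ^ 2 = v := Real.sq_sqrt hv.le
  have haL : a ≤ Real.sqrt L := Real.sqrt_le_sqrt huL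
  have hbC : b ≤ Real.sqrt C := Real.sqrt_le_sqrt hvC
  -- log(u/v) = 2 log(a/b)
  have hloguv : Real.log (u / v) = 2 * Real.log (a / b) := by
    rw [← ha2, ← hb2, Real.log_div (by positivity) (by positivity),
      Real.log_div ha.ne' hb.ne', Real.log_pow, Real.log_pow]
    push_cast; ring
  -- log(a/b) ≥ 1 - b/a
  have hlogab : 1 - b / a ≤ Real.log (a / b) := by
    have h1 : Real.log (b / a) ≤ b / a - 1 :=
      Real.log_le_sub_one_of_pos (by positivity)
    have h2 : Real.log (a / b) = - Real.log (b / a) := by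
      rw [← Real.log_inv, inv_div]
    linarith
  -- entropy lower bound: (a-b)^2 ≤ u log(u/v) - u + v
  have key : (a - b) ^ 2 ≤ u * Real.log (u / v) - u + v := by
    have h1 : 2 * a ^ 2 * (1 - b / a) ≤ 2 * a ^ 2 * Real.log (a / b) :=
      mul_le_mul_of_nonneg_left hlogab (by positivity)
    have h2 : 2 * a ^ 2 * (1 - b / a) = 2 * a ^ 2 - 2 * a * b := by
      field_simp
    have h3 : u * Real.log (u / v) = 2 * a ^ 2 * Real.log (a / b) := by
      rw [hloguv, ← ha2]; ring
    nlinarith [h1, h2, h3, ha2, hb2]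
  have huv : u - v = (a - b) * (a + b) := by rw [← ha2, ← hb2]; ring
  have hab_nonneg : (0:ℝ) ≤ a + b := by positivity
  have habL : a + b ≤ Real.sqrt L + Real.sqrt C := add_le_add haL hbC
  have hsq : (a + b) ^ 2 ≤ (Real.sqrt L + Real.sqrt C) ^ 2 :=
    pow_le_pow_left₀ hab_nonneg habL 2
  rw [sq_abs, huv]
  have hsqnn : (0:ℝ) ≤ (a - b) ^ 2 := sq_nonneg _
  calc ((a - b) * (a + b)) ^ 2 = (a - b) ^ 2 * (a + b) ^ 2 := by ring
    _ ≤ (a - b) ^ 2 * (Real.sqrt L + Real.sqrt C) ^ 2 :=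
        mul_le_mul_of_nonneg_left hsq hsqnn
    _ ≤ (Real.sqrt L + Real.sqrt C) ^ 2 * (u * Real.log (u / v) - u + v) := by
        rw [mul_comm]
        exact mul_le_mul_of_nonneg_left key (by positivity)
end
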